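/- arXiv:1909.06100 — 8 statements merged into one kernel-verified Lean document; each statement's English description precedes it below -/
import Mathlib

section
/- For all integers ℓ ≥ 2 and k ≥ 2, the quantity 3(k+1)(ℓ^k-1)^2 / (2(ℓ^{k-1}-1)(ℓ^{k+1}-1)) - k is strictly greater than (k+3)/2 (as rational numbers). -/
theorem stmt_1 (ℓ : ℤ) (k : ℕ) (hℓ : 2 ≤ ℓ) (hk : 2 ≤ k) :
    3 * ((k : ℚ) + 1) * ((ℓ : ℚ) ^ k - 1) ^ 2 /
      (2 * ((ℓ : ℚ) ^ (k - 1) - 1) * ((ℓ : ℚ) ^ (k + 1) - 1)) - (k : ℚ)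
    > ((k : ℚ) + 3) / 2 := by
  obtain ⟨m, rfl⟩ : ∃ m, k = m + 2 := ⟨k - 2, by omega⟩
  have hq : (2 : ℚ) ≤ (ℓ : ℚ) := by exact_mod_cast hℓ
  set q : ℚ := (ℓ : ℚ) with hqdef
  have ha : (2 : ℚ) ≤ q ^ (m + 1) := by
    calc (2:ℚ) ≤ q := hq
    _ = q ^ 1 := (pow_one q).symm
    _ ≤ q ^ (m + 1) := pow_le_pow_right₀ (by linarith) (by omega)
  set a : ℚ := q ^ (m + 1) with hadef
  have h1 : q ^ (m + 2 - 1) = a := by norm_num [hadef]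
  have h2 : q ^ (m + 2) = a * q := by rw [hadef, ← pow_succ]
  have h3 : q ^ (m + 2 + 1) = a * q ^ 2 := by rw [hadef, ← pow_add]
  rw [h1, h2, h3]
  have h4 : (4:ℚ) ≤ q ^ 2 := by nlinarith
  have h5 : (8:ℚ) ≤ a * q ^ 2 := by nlinarith
  have hD : 0 < 2 * (a - 1) * (a * q ^ 2 - 1) := by nlinarith
  rw [gt_iff_lt, lt_sub_iff_add_lt, lt_div_iff₀ hD]
  have hm : (0:ℚ) ≤ (m : ℚ) := by positivity
  nlinarith [mul_pos (mul_pos (show (0:ℚ) < 3 * ((m:ℚ) + 2 + 1) by linarith)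
      (show (0:ℚ) < a by linarith)) (sq_nonneg (q - 1) |>.lt_of_ne (by nlinarith)),
    sq_nonneg (q - 1), mul_nonneg hm (sq_nonneg (q-1))]
end

section
/- For all integers ℓ ≥ 2 and k ≥ 2, 0 < 2(ℓ^{k-1}-1)(ℓ^{k+1}-1) / (3(k+1)(ℓ^k-1)^2 - 2k(ℓ^{k-1}-1)(ℓ^{k+1}-1)) < 2/(k+3), where the denominator 3(k+1)(ℓ^k-1)^2 - 2k(ℓ^{k-1}-1)(ℓ^{k+1}-1) is positive. -/
theorem stmt_2 (ℓ : ℤ) (k : ℕ) (hℓ : 2 ≤ ℓ) (hk : 2 ≤ k) :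
    0 < 3 * ((k : ℚ) + 1) * ((ℓ : ℚ) ^ k - 1) ^ 2 -
        2 * (k : ℚ) * ((ℓ : ℚ) ^ (k - 1) - 1) * ((ℓ : ℚ) ^ (k + 1) - 1) ∧
    0 < 2 * ((ℓ : ℚ) ^ (k - 1) - 1) * ((ℓ : ℚ) ^ (k + 1) - 1) /
        (3 * ((k : ℚ) + 1) * ((ℓ : ℚ) ^ k - 1) ^ 2 -
          2 * (k : ℚ) * ((ℓ : ℚ) ^ (k - 1) - 1) * ((ℓ : ℚ) ^ (k + 1) - 1)) ∧
    2 * ((ℓ : ℚ) ^ (k - 1) - 1) * ((ℓ : ℚ) ^ (k + 1) - 1) /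
        (3 * ((k : ℚ) + 1) * ((ℓ : ℚ) ^ k - 1) ^ 2 -
          2 * (k : ℚ) * ((ℓ : ℚ) ^ (k - 1) - 1) * ((ℓ : ℚ) ^ (k + 1) - 1))
      < 2 / ((k : ℚ) + 3) := by
  obtain ⟨m, rfl⟩ : ∃ m, k = m + 2 := ⟨k - 2, by omega⟩
  set L : ℚ := (ℓ : ℚ) with hLdef
  have hL : (2 : ℚ) ≤ L := by rw [hLdef]; exact_mod_cast hℓ
  have hk1 : m + 2 - 1 = m + 1 := by omega
  rw [hk1]
  set a : ℚ := L ^ (m + 1) with ha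
  have h1 : L ^ (m + 2) = a * L := by rw [ha, pow_succ]
  have h2 : L ^ (m + 2 + 1) = a * L ^ 2 := by rw [ha]; ring
  rw [h1, h2]
  have hK : ((m + 2 : ℕ) : ℚ) = (m : ℚ) + 2 := by push_cast; ring
  rw [hK]
  have hm : (0 : ℚ) ≤ (m : ℚ) := Nat.cast_nonneg m
  have haL : L ≤ a := le_self_pow₀ (by linarith) (by omega)
  have ha2 : (2 : ℚ) ≤ a := le_trans hL haL
  -- key inequality: (a-1)(aL²-1) < (aL-1)²
  have key : (a - 1) * (a * L ^ 2 - 1) < (a * L - 1) ^ 2 := by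
    nlinarith [mul_pos (show (0:ℚ) < a by linarith) (show (0:ℚ) < (L - 1)^2 by nlinarith)]
  have hLL : (8:ℚ) ≤ a * L ^ 2 := by nlinarith
  have hNpos : 0 < 2 * (a - 1) * (a * L ^ 2 - 1) := by nlinarith
  have hSpos : (0 : ℚ) < (a * L - 1) ^ 2 := by nlinarith
  have hD : 0 < 3 * ((m : ℚ) + 2 + 1) * (a * L - 1) ^ 2 -
      2 * ((m : ℚ) + 2) * (a - 1) * (a * L ^ 2 - 1) := by nlinarith
  refine ⟨hD, div_pos hNpos hD, ?_⟩
  rw [div_lt_div_iff₀ hD (by linarith : (0:ℚ) < (m : ℚ) + 2 + 3)]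
  nlinarith [mul_lt_mul_of_pos_left key (show (0:ℚ) < 3 * ((m:ℚ) + 2 + 1) by linarith)]
end

section
/- Let k ≥ 2 and ℓ ≥ 2 be integers and H(X) = B_{k+1}(ℓX+1) - B_{k+1}(X+1) ∈ ℚ[X]. Then H(0) = 0, and the multiplicity of 0 as a root of H is 1 if k is even and 2 if k is odd. -/
open Polynomial

lemma bern'_even_ne_zero {m : ℕ} (hm : Even m) (h2 : 2 ≤ m) : bernoulli' m ≠ 0 := by
  obtain ⟨j, rfl⟩ : ∃ j, m = 2 * j := hm.exists_two_nsmul m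
  have hj : j ≠ 0 := by omega
  intro h0
  have hb : _root_.bernoulli (2 * j) = 0 := by
    rw [bernoulli_eq_bernoulli'_of_ne_one (by omega), h0]
  have hs := hasSum_zeta_nat hj
  rw [hb] at hs
  simp only [Rat.cast_zero, mul_zero, zero_div] at hs
  have h1 : (1 : ℝ) / (1 : ℕ) ^ (2 * j) ≤ 0 :=
    le_hasSum hs 1 (fun i _ => by positivity)
  norm_num at h1

lemma deriv_comp_lin (p : ℚ[X]) (c : ℚ) :
    derivative (p.comp (C c * X + 1)) = C c * (derivative p).comp (C c * X + 1) := by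
  rw [derivative_comp]
  simp only [derivative_add, derivative_mul, derivative_C, derivative_X, derivative_one,
    zero_mul, mul_one, zero_add, add_zero]

lemma deriv_comp_X1 (p : ℚ[X]) :
    derivative (p.comp (X + 1)) = (derivative p).comp (X + 1) := by
  rw [derivative_comp]; simp

open Polynomial in
theorem stmt_10 (k ℓ : ℕ) (hk : 2 ≤ k) (hℓ : 2 ≤ ℓ) :
    ((Polynomial.bernoulli (k + 1)).comp (C (ℓ : ℚ) * X + 1) -
      (Polynomial.bernoulli (k + 1)).comp (X + 1)).eval 0 = 0 ∧
    ((Polynomial.bernoulli (k + 1)).comp (C (ℓ : ℚ) * X + 1) -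
      (Polynomial.bernoulli (k + 1)).comp (X + 1)).rootMultiplicity 0 =
      (if Even k then 1 else 2) := by
  set H : ℚ[X] := (Polynomial.bernoulli (k + 1)).comp (C (ℓ : ℚ) * X + 1) -
      (Polynomial.bernoulli (k + 1)).comp (X + 1) with hH
  have heval : H.eval 0 = 0 := by simp [hH, eval_comp]
  refine ⟨heval, ?_⟩
  -- first derivative
  have hD1 : derivative H = C (ℓ : ℚ) * ((k + 1 : ℚ) • Polynomial.bernoulli k).comp (C (ℓ : ℚ) * X + 1)
      - ((k + 1 : ℚ) • Polynomial.bernoulli k).comp (X + 1) := by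
    rw [hH, derivative_sub, deriv_comp_lin, deriv_comp_X1, derivative_bernoulli_add_one]
    push_cast
    simp [smul_eq_C_mul]
  have hD1eval : (derivative H).eval 0 = (k + 1 : ℚ) * ((ℓ : ℚ) - 1) * bernoulli' k := by
    rw [hD1]
    simp [eval_comp, Polynomial.bernoulli_eval_one]
    ring
  -- second derivative
  have hD2 : derivative (derivative H) =
      C (ℓ : ℚ) * (C (ℓ : ℚ) * ((k + 1 : ℚ) • ((k : ℚ) • Polynomial.bernoulli (k - 1))).comp (C (ℓ : ℚ) * X + 1))
      - ((k + 1 : ℚ) • ((k : ℚ) • Polynomial.bernoulli (k - 1))).comp (X + 1) := by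
    rw [hD1, derivative_sub, derivative_mul, derivative_C, zero_mul, zero_add]
    rw [deriv_comp_lin, deriv_comp_X1]
    rw [derivative_smul, derivative_bernoulli k]
    simp [smul_eq_C_mul]
  have hD2eval : (derivative (derivative H)).eval 0 =
      (k + 1 : ℚ) * (k : ℚ) * ((ℓ : ℚ) ^ 2 - 1) * bernoulli' (k - 1) := by
    rw [hD2]
    simp [eval_comp, Polynomial.bernoulli_eval_one]
    ring
  have hk1 : (k + 1 : ℚ) ≠ 0 := by positivity
  have hℓ1 : (ℓ : ℚ) - 1 ≠ 0 := by
    have : (2 : ℚ) ≤ (ℓ : ℚ) := by exact_mod_cast hℓ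
    linarith
  by_cases hke : Even k
  · -- multiplicity 1
    have hD1ne : (derivative H).eval 0 ≠ 0 := by
      rw [hD1eval]
      exact mul_ne_zero (mul_ne_zero hk1 hℓ1) (by exact_mod_cast bern'_even_ne_zero hke hk)
    have hHne : H ≠ 0 := fun h => hD1ne (by simp [h])
    have hroot : H.IsRoot 0 := heval
    have h1 : (derivative H).rootMultiplicity 0 = H.rootMultiplicity 0 - 1 :=
      derivative_rootMultiplicity_of_root hroot
    have h2 : (derivative H).rootMultiplicity 0 = 0 :=
      rootMultiplicity_eq_zero hD1ne
    have h3 : 0 < H.rootMultiplicity 0 := (rootMultiplicity_pos hHne).2 hroot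
    simp only [if_pos hke]
    omega
  · -- multiplicity 2
    have hko : Odd k := Nat.odd_iff.mpr (Nat.not_even_iff.mp hke)
    have hk3 : 3 ≤ k := by
      rcases hko with ⟨j, rfl⟩; omega
    have hbk : bernoulli' k = 0 := bernoulli'_eq_zero_of_odd hko (by omega)
    have hD1z : (derivative H).eval 0 = 0 := by rw [hD1eval, hbk]; push_cast; ring
    have hD2ne : (derivative (derivative H)).eval 0 ≠ 0 := by
      rw [hD2eval]
      have hkq : (k : ℚ) ≠ 0 := by positivity
      have hℓ2 : (ℓ : ℚ) ^ 2 - 1 ≠ 0 := by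
        have : (2 : ℚ) ≤ (ℓ : ℚ) := by exact_mod_cast hℓ
        nlinarith
      have hbe : bernoulli' (k - 1) ≠ 0 := by
        apply bern'_even_ne_zero
        · rcases hko with ⟨j, rfl⟩; exact ⟨j, by omega⟩
        · omega
      exact mul_ne_zero (mul_ne_zero (mul_ne_zero hk1 hkq) hℓ2) (by exact_mod_cast hbe)
    have hD1nz : derivative H ≠ 0 := fun h => hD2ne (by simp [h])
    have hHne : H ≠ 0 := fun h => hD1nz (by simp [h])
    have hroot : H.IsRoot 0 := heval
    have hroot1 : (derivative H).IsRoot 0 := hD1z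
    have h1 : (derivative H).rootMultiplicity 0 = H.rootMultiplicity 0 - 1 :=
      derivative_rootMultiplicity_of_root hroot
    have h1' : (derivative (derivative H)).rootMultiplicity 0 = (derivative H).rootMultiplicity 0 - 1 :=
      derivative_rootMultiplicity_of_root hroot1
    have h2 : (derivative (derivative H)).rootMultiplicity 0 = 0 :=
      rootMultiplicity_eq_zero hD2ne
    have h3 : 0 < H.rootMultiplicity 0 := (rootMultiplicity_pos hHne).2 hroot
    have h4 : 0 < (derivative H).rootMultiplicity 0 := (rootMultiplicity_pos hD1nz).2 hroot1
    simp only [if_neg hke]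
    omega
end

section
/- Let k ≥ 2, k ≠ 3, and ℓ ≥ 2 be integers, and let H(X) = B_{k+1}(ℓX+1) - B_{k+1}(X+1) ∈ ℚ[X]. Then H, viewed over the complex numbers (or an algebraic closure of ℚ), has at least three distinct roots. -/
/-!
Write `h_j` for the coefficients of `H = B_{k+1}(ℓX + 1) - B_{k+1}(X + 1)`. Taylor expansion at `1`
gives `j! h_j = (k+1)_j (ℓ^j - 1) B'_{k+1-j}`, so `h_0 = 0` and, for `j ≥ 1`, `h_j` vanishes exactly
when the Bernoulli number `B'_{k+1-j}` does, i.e. when `k + 1 - j` is odd and at least `3`.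
A polynomial whose only roots are `0` and some `b ≠ 0` is `c X^r (X - b)^s`, and its coefficients
at `X^r` and `X^(r+1)` are both nonzero. For `k ≥ 4` the lowest nonzero coefficient of `H` (at
`X` for even `k`, at `X^2` for odd `k`) is followed by a zero one, so `H` has a third root.
For `k = 2`, `H` is a cubic of discriminant `(ℓ - 1)^4 (ℓ^2 + 10ℓ + 1) / 16 ≠ 0`.
-/

open Polynomial

theorem Finset.exists_ne_subset_pair_of_card_le_two {α : Type*} [DecidableEq α] [Nontrivial α]
    {s : Finset α} {a : α} (ha : a ∈ s) (hs : s.card ≤ 2) : ∃ b ≠ a, s ⊆ {a, b} := by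
  by_cases hsa : s ⊆ {a}
  · obtain ⟨b, hb⟩ := exists_ne a
    exact ⟨b, hb, hsa.trans (by simp)⟩
  · obtain ⟨b, hbs, hba⟩ := Finset.not_subset.mp hsa
    rw [Finset.mem_singleton] at hba
    refine ⟨b, hba, (Finset.eq_of_subset_of_card_le ?_ ?_).symm.subset⟩
    · exact Finset.insert_subset ha (Finset.singleton_subset_iff.mpr hbs)
    · rwa [Finset.card_pair (Ne.symm hba)]

namespace Polynomial

variable {K : Type*} [Field K] [DecidableEq K] [IsAlgClosed K]

theorem eq_C_mul_X_pow_mul_X_sub_C_pow {f : K[X]} {b : K} (hb : b ≠ 0)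
    (hroots : f.roots.toFinset ⊆ {0, b}) :
    f = C f.leadingCoeff * X ^ f.roots.count 0 * (X - C b) ^ f.roots.count b := by
  conv_lhs => rw [(IsAlgClosed.splits f).eq_prod_roots, Finset.prod_multiset_map_count,
    Finset.prod_subset hroots fun a _ ha ↦ by
      rw [Multiset.count_eq_zero.mpr (by simpa using ha), pow_zero],
    Finset.prod_pair hb.symm]
  simp [mul_assoc]

theorem three_le_card_roots_toFinset_of_coeff_succ_eq_zero [CharZero K] {f : K[X]} {p : ℕ}
    (hp0 : p ≠ 0) (hlow : ∀ i < p, f.coeff i = 0) (hp : f.coeff p ≠ 0)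
    (hgap : f.coeff (p + 1) = 0) (hdeg : p < f.natDegree) : 3 ≤ f.roots.toFinset.card := by
  by_contra! hcard
  have hf : f ≠ 0 := fun h ↦ hp (by rw [h, coeff_zero])
  have h0 : (0 : K) ∈ f.roots.toFinset := by
    rw [Multiset.mem_toFinset, mem_roots hf, IsRoot, ← coeff_zero_eq_eval_zero]
    exact hlow 0 (Nat.pos_of_ne_zero hp0)
  obtain ⟨b, hb, hsub⟩ := Finset.exists_ne_subset_pair_of_card_le_two h0 (by omega)
  set c := f.leadingCoeff
  set r := f.roots.count 0
  set s := f.roots.count b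
  have hc : c ≠ 0 := leadingCoeff_ne_zero.mpr hf
  have hcoeff (i : ℕ) :
      f.coeff i = if r ≤ i then c * (-b) ^ (s - (i - r)) * s.choose (i - r) else 0 := by
    rw [eq_C_mul_X_pow_mul_X_sub_C_pow hb hsub, mul_right_comm, coeff_mul_X_pow', mul_assoc,
      coeff_C_mul, sub_eq_add_neg, ← C_neg, coeff_X_add_C_pow]
  have hrp : r = p := by
    refine le_antisymm ?_ ?_
    · by_contra! h
      exact hp (by rw [hcoeff, if_neg (by omega)])
    · by_contra! h
      have hr := hlow r h
      rw [hcoeff, if_pos le_rfl, Nat.sub_self] at hr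
      simp [hc, hb] at hr
  have hs : s ≠ 0 := by
    intro hs
    have hlead : f.coeff f.natDegree ≠ 0 := hc
    rw [hcoeff, if_pos (by omega), hs] at hlead
    simp [Nat.choose_eq_zero_of_lt (show 0 < f.natDegree - r by omega)] at hlead
  rw [hcoeff, if_pos (by omega), show p + 1 - r = 1 by omega, Nat.choose_one_right] at hgap
  simp [hc, hb, hs] at hgap

end Polynomial

theorem bernoulli'_ne_zero_of_even {n : ℕ} (he : Even n) (hn : n ≠ 0) : bernoulli' n ≠ 0 := by
  obtain ⟨m, rfl⟩ := he
  have hm : m ≠ 0 := by omega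
  rw [← bernoulli_eq_bernoulli'_of_ne_one (by omega), ← two_mul]
  intro h
  have hζ : riemannZeta (2 * m : ℕ) ≠ 0 :=
    riemannZeta_ne_zero_of_one_lt_re (by rw [Complex.natCast_re]; exact_mod_cast (by omega))
  push_cast at hζ
  simp [riemannZeta_two_mul_nat hm, h] at hζ

theorem bernoulli'_eq_zero_iff {n : ℕ} : bernoulli' n = 0 ↔ Odd n ∧ 1 < n := by
  refine ⟨fun h ↦ ?_, fun h ↦ bernoulli'_eq_zero_of_odd h.1 h.2⟩
  rcases Nat.even_or_odd n with hn | hn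
  · rcases eq_or_ne n 0 with rfl | hn0
    · simp at h
    · exact absurd h (bernoulli'_ne_zero_of_even hn hn0)
  · refine ⟨hn, lt_of_le_of_ne hn.pos ?_⟩
    rintro rfl
    simp at h

theorem iterate_derivative_bernoulli_comp (n j : ℕ) (a : ℚ) :
    derivative^[j] ((Polynomial.bernoulli n).comp (C a * X + 1)) =
      C (n.descFactorial j * a ^ j) * (Polynomial.bernoulli (n - j)).comp (C a * X + 1) := by
  induction j with
  | zero => simp
  | succ j ih =>
    rw [Function.iterate_succ_apply', ih, derivative_C_mul, derivative_comp,
      derivative_bernoulli, Nat.sub_sub, Nat.descFactorial_succ]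
    simp only [mul_comp, natCast_comp, derivative_add, derivative_C_mul_X, derivative_one,
      add_zero, C_mul, map_natCast, pow_succ, Nat.cast_mul]
    ring

theorem factorial_mul_coeff_bernoulli_comp (n j : ℕ) (a : ℚ) :
    (j.factorial : ℚ) * ((Polynomial.bernoulli n).comp (C a * X + 1)).coeff j =
      n.descFactorial j * a ^ j * bernoulli' (n - j) := by
  have h := coeff_iterate_derivative (k := j) ((Polynomial.bernoulli n).comp (C a * X + 1)) 0
  rw [iterate_derivative_bernoulli_comp, zero_add, Nat.descFactorial_self, nsmul_eq_mul,
    coeff_zero_eq_eval_zero] at h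
  simpa [eval_comp, bernoulli_eval_one] using h.symm

noncomputable def bernoulliDiff (n ℓ : ℕ) : ℚ[X] :=
  (Polynomial.bernoulli n).comp (C (ℓ : ℚ) * X + 1) - (Polynomial.bernoulli n).comp (X + 1)

theorem coeff_bernoulliDiff (n ℓ j : ℕ) :
    (bernoulliDiff n ℓ).coeff j =
      n.descFactorial j * ((ℓ : ℚ) ^ j - 1) * bernoulli' (n - j) / j.factorial := by
  have hX : (X + 1 : ℚ[X]) = C 1 * X + 1 := by rw [C_1, one_mul]
  rw [eq_div_iff (by positivity), bernoulliDiff, hX, coeff_sub, mul_comm, mul_sub,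
    factorial_mul_coeff_bernoulli_comp, factorial_mul_coeff_bernoulli_comp]
  ring

theorem coeff_bernoulliDiff_eq_zero_iff {n ℓ j : ℕ} (hℓ : 2 ≤ ℓ) (hj : j ≠ 0) (hjn : j ≤ n) :
    (bernoulliDiff n ℓ).coeff j = 0 ↔ Odd (n - j) ∧ 1 < n - j := by
  have hpow : (ℓ : ℚ) ^ j - 1 ≠ 0 :=
    sub_ne_zero.mpr (one_lt_pow₀ (by exact_mod_cast hℓ) hj).ne'
  have hdesc : (n.descFactorial j : ℚ) ≠ 0 := by
    exact_mod_cast Nat.descFactorial_eq_zero_iff_lt.not.mpr (by omega)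
  simp [coeff_bernoulliDiff, hpow, hdesc, Nat.factorial_ne_zero, bernoulli'_eq_zero_iff]

theorem natDegree_bernoulliDiff (n : ℕ) {ℓ : ℕ} (hℓ : 2 ≤ ℓ) :
    (bernoulliDiff n ℓ).natDegree = n := by
  rcases Nat.eq_zero_or_pos n with rfl | hn
  · simp [bernoulliDiff]
  refine natDegree_eq_of_le_of_coeff_ne_zero ?_ ?_
  · exact natDegree_le_iff_coeff_eq_zero.mpr fun N hN ↦ by
      simp [coeff_bernoulliDiff, Nat.descFactorial_eq_zero_iff_lt.mpr hN]
  · simp [coeff_bernoulliDiff_eq_zero_iff hℓ hn.ne' le_rfl]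

theorem bernoulliDiff_three (ℓ : ℕ) :
    bernoulliDiff 3 ℓ =
      Cubic.toPoly ⟨(ℓ : ℚ) ^ 3 - 1, 3 * ((ℓ : ℚ) ^ 2 - 1) / 2, ((ℓ : ℚ) - 1) / 2, 0⟩ := by
  ext (_ | _ | _ | _ | j)
  · simp [coeff_bernoulliDiff]
  · simp [coeff_bernoulliDiff, Nat.descFactorial, bernoulli'_two]; ring
  · simp [coeff_bernoulliDiff, Nat.descFactorial]; ring
  · simp [coeff_bernoulliDiff, Nat.descFactorial, Nat.factorial_succ]
  · rw [Cubic.coeff_eq_zero (by omega), coeff_bernoulliDiff,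
      Nat.descFactorial_eq_zero_iff_lt.mpr (by omega)]
    simp

theorem three_le_card_roots_bernoulliDiff_three {ℓ : ℕ} (hℓ : 2 ≤ ℓ) :
    3 ≤ ((bernoulliDiff 3 ℓ).map (algebraMap ℚ ℂ)).roots.toFinset.card := by
  have hL : (1 : ℚ) < ℓ := by exact_mod_cast hℓ
  set P : Cubic ℚ := ⟨(ℓ : ℚ) ^ 3 - 1, 3 * ((ℓ : ℚ) ^ 2 - 1) / 2, ((ℓ : ℚ) - 1) / 2, 0⟩
  have ha : P.a ≠ 0 := sub_ne_zero.mpr (one_lt_pow₀ hL (by norm_num)).ne'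
  have hd : P.discr ≠ 0 := by
    have hdiscr : P.discr = ((ℓ : ℚ) - 1) ^ 4 * ((ℓ : ℚ) ^ 2 + 10 * ℓ + 1) / 16 := by
      simp only [Cubic.discr, P]; ring
    have : (0 : ℚ) < ℓ - 1 := by linarith
    rw [hdiscr]
    positivity
  have h3 := Cubic.card_roots_of_discr_ne_zero (φ := algebraMap ℚ ℂ) ha (IsAlgClosed.splits _) hd
  rw [Cubic.roots, Cubic.map_toPoly] at h3
  rw [bernoulliDiff_three, h3]

theorem stmt_11 (k ℓ : ℕ) (hk : 2 ≤ k) (hk3 : k ≠ 3) (hℓ : 2 ≤ ℓ) :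
    3 ≤ ((((Polynomial.bernoulli (k + 1)).comp (C (ℓ : ℚ) * X + 1) -
      (Polynomial.bernoulli (k + 1)).comp (X + 1)).map
        (algebraMap ℚ ℂ)).roots.toFinset.card) := by
  change 3 ≤ ((bernoulliDiff (k + 1) ℓ).map (algebraMap ℚ ℂ)).roots.toFinset.card
  obtain rfl | hk4 := hk.eq_or_lt
  · exact three_le_card_roots_bernoulliDiff_three hℓ
  have hcoeff {j : ℕ} (hj : j ≠ 0) (hjk : j ≤ k + 1) :
      ((bernoulliDiff (k + 1) ℓ).map (algebraMap ℚ ℂ)).coeff j = 0 ↔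
        (k + 1 - j) % 2 = 1 ∧ 1 < k + 1 - j := by
    rw [coeff_map, map_eq_zero_iff _ (algebraMap ℚ ℂ).injective,
      coeff_bernoulliDiff_eq_zero_iff hℓ hj hjk, Nat.odd_iff]
  have hcoeff0 : ((bernoulliDiff (k + 1) ℓ).map (algebraMap ℚ ℂ)).coeff 0 = 0 := by
    simp [coeff_bernoulliDiff]
  have hdeg : ((bernoulliDiff (k + 1) ℓ).map (algebraMap ℚ ℂ)).natDegree = k + 1 := by
    rw [natDegree_map, natDegree_bernoulliDiff _ hℓ]
  rcases Nat.even_or_odd k with hke | hko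
  · rw [Nat.even_iff] at hke
    refine three_le_card_roots_toFinset_of_coeff_succ_eq_zero one_ne_zero
      (fun i hi ↦ by rwa [Nat.lt_one_iff.mp hi]) ?_ ?_ (by omega)
    · rw [Ne, hcoeff one_ne_zero (by omega)]; omega
    · rw [hcoeff two_ne_zero (by omega)]; omega
  · rw [Nat.odd_iff] at hko
    refine three_le_card_roots_toFinset_of_coeff_succ_eq_zero two_ne_zero (fun i hi ↦ ?_) ?_ ?_
      (by omega)
    · obtain rfl | rfl : i = 0 ∨ i = 1 := by omega
      · exact hcoeff0
      · rw [hcoeff one_ne_zero (by omega)]; omega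
    · rw [Ne, hcoeff two_ne_zero (by omega)]; omega
    · rw [hcoeff three_ne_zero (by omega)]; omega
end

section
/- Let k ≥ 2 be an even integer and ℓ ≥ 3 an odd integer. There is no rational number α with α^n = (k+1)(ℓ-1)B_k/(ℓ^{k+1}-1) for any integer n ≥ 2 dividing k, where B_k is the k-th Bernoulli number. -/
/-!
By von Staudt–Clausen, `B_k` has 2-adic valuation `-1`. Since `k + 1` and
`(ℓ^(k+1) - 1) / (ℓ - 1) = ∑_{i ≤ k} ℓ^i` are odd, the right-hand side has 2-adic valuation `-1`
as well, whereas the valuation of an `n`-th power is a multiple of `n`.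
-/

open Finset

theorem Odd.geom_sum {ℓ n : ℕ} (hℓ : Odd ℓ) (hn : Odd n) : Odd (∑ i ∈ range n, ℓ ^ i) := by
  rw [odd_sum_iff_odd_card_odd, filter_true_of_mem fun i _ ↦ hℓ.pow, card_range]
  exact hn

/-- `1 / p` is the only term of the von Staudt–Clausen relation `B_k + ∑_{(q - 1) ∣ k} 1 / q ∈ ℤ`
that is not a `p`-adic integer. -/
theorem padicNorm_bernoulli_of_sub_one_dvd {p k : ℕ} [Fact p.Prime] (hk : Even k) (hk0 : k ≠ 0)
    (hp : p - 1 ∣ k) : padicNorm p (bernoulli k) = p := by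
  obtain ⟨m, rfl⟩ := hk.two_dvd
  obtain ⟨z, hz⟩ := Bernoulli.vonStaudt_clausen m
  set S := (range (2 * m + 2)).filter fun q ↦ q.Prime ∧ q - 1 ∣ 2 * m
  have hpS : p ∈ S := by
    have := Nat.le_of_dvd (Nat.pos_of_ne_zero hk0) hp
    simp only [S, mem_filter, mem_range]
    exact ⟨by omega, Fact.out, hp⟩
  rw [← add_sum_erase S _ hpS] at hz
  set T := ∑ q ∈ S.erase p, (1 : ℚ) / q
  have hT : padicNorm p T ≤ 1 := by
    refine padicNorm.sum_le' (fun q hq ↦ ?_) zero_le_one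
    obtain ⟨hqp, -, hq, -⟩ := by simpa only [S, mem_erase, mem_filter] using hq
    have : Fact q.Prime := ⟨hq⟩
    rw [padicNorm.div, padicNorm.one, padicNorm.padicNorm_of_prime_of_ne (Ne.symm hqp), div_one]
  have hzT : padicNorm p (z - T) ≤ 1 := padicNorm.sub.trans (max_le (padicNorm.of_int z) hT)
  have hp1 : padicNorm p (-(1 / p)) = p := by
    rw [padicNorm.neg, padicNorm.div, padicNorm.one, padicNorm.padicNorm_p_of_prime, one_div, inv_inv]
  have hp_gt : (1 : ℚ) < p := by exact_mod_cast (Fact.out : p.Prime).one_lt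
  have hB : bernoulli (2 * m) = (z - T) + -(1 / p) := by linarith
  rw [hB, padicNorm.add_eq_max_of_ne (by linarith), hp1, max_eq_right (by linarith)]

theorem pow_ne_of_padicNorm_eq_self {p : ℕ} [Fact p.Prime] {x : ℚ} (hx : padicNorm p x = p)
    {n : ℕ} (hn : 2 ≤ n) (α : ℚ) : α ^ n ≠ x := by
  rintro rfl
  have hα : α ≠ 0 := by
    rintro rfl
    rw [zero_pow (by omega), padicNorm.zero] at hx
    exact (Fact.out : p.Prime).ne_zero (by exact_mod_cast hx.symm)
  obtain ⟨z, hz⟩ := padicNorm.values_discrete (p := p) hα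
  have hp_gt : (1 : ℚ) < p := by exact_mod_cast (Fact.out : p.Prime).one_lt
  have hzn : (p : ℚ) ^ (-z * n) = (p : ℚ) ^ (1 : ℤ) := by
    rw [zpow_mul, zpow_natCast, ← hz, ← IsAbsoluteValue.abv_pow (padicNorm p), hx, zpow_one]
  have hn1 : (n : ℤ) ∣ 1 := ⟨-z, by linarith [zpow_right_injective₀ (by linarith) hp_gt.ne' hzn]⟩
  have := Int.le_of_dvd one_pos hn1
  omega

theorem stmt_16 (k ℓ : ℕ) (hk : 2 ≤ k) (hke : Even k) (hℓ : 3 ≤ ℓ) (hℓo : Odd ℓ) :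
    ¬ ∃ (α : ℚ) (n : ℕ), 2 ≤ n ∧ n ∣ k ∧
      α ^ n = ((k : ℚ) + 1) * ((ℓ : ℚ) - 1) * bernoulli k / ((ℓ : ℚ) ^ (k + 1) - 1) := by
  rintro ⟨α, n, hn, -, hα⟩
  have hℓ1 : (ℓ : ℚ) ≠ 1 := by norm_cast; omega
  have hrhs : ((k : ℚ) + 1) * ((ℓ : ℚ) - 1) * bernoulli k / ((ℓ : ℚ) ^ (k + 1) - 1) =
      ((k + 1 : ℕ) : ℚ) * bernoulli k / ((∑ i ∈ range (k + 1), ℓ ^ i : ℕ) : ℚ) := by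
    have : (ℓ : ℚ) - 1 ≠ 0 := sub_ne_zero.mpr hℓ1
    push_cast
    rw [geom_sum_eq hℓ1]
    field_simp
  have hodd : ∀ {m : ℕ}, Odd m → padicNorm 2 (m : ℚ) = 1 := fun hm ↦
    (padicNorm.nat_eq_one_iff _).mpr (Nat.two_dvd_ne_zero.mpr (Nat.odd_iff.mp hm))
  refine pow_ne_of_padicNorm_eq_self (p := 2) ?_ hn α hα
  rw [hrhs, padicNorm.div, padicNorm.mul, hodd hke.add_one, hodd (hℓo.geom_sum hke.add_one),
    padicNorm_bernoulli_of_sub_one_dvd hke (by omega) (by simp)]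
  norm_num
end

section
/- Let k ≥ 3 be an odd integer and ℓ ≥ 3 an odd integer. There is no rational number α with α^2 = C(k+1,2)(ℓ^2-1)B_{k-1}/(ℓ^{k+1}-1), where B_{k-1} is the (k-1)-st Bernoulli number. -/
/-!
By von Staudt–Clausen, `B_{2n} + 1/2` is an integer minus a sum of `1/p` over odd primes `p`,
so `v₂(B_{2n}) = -1`. By lifting the exponent, `v₂(ℓ^(k+1) - 1) = v₂(ℓ² - 1) + v₂(k+1) - 1`,
while `v₂(C(k+1, 2)) = v₂(k+1) - 1` since `k` is odd; hence
`C(k+1, 2) (ℓ² - 1) / (ℓ^(k+1) - 1)` is a `2`-adic unit and the right-hand side has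
`2`-adic valuation `-1`, which is odd.
-/

open Finset

theorem not_exists_sq_eq_of_odd_padicValRat {p : ℕ} [Fact p.Prime] {q : ℚ}
    (h : Odd (padicValRat p q)) : ¬∃ α : ℚ, α ^ 2 = q := by
  rintro ⟨α, rfl⟩
  rw [padicValRat.pow, Nat.cast_two] at h
  exact Int.not_even_iff_odd.2 h (even_two_mul _)

theorem padicNorm_two_bernoulli_two_mul {n : ℕ} (hn : 0 < n) :
    padicNorm 2 (bernoulli (2 * n)) = 2 := by
  obtain ⟨z, hz⟩ := Bernoulli.vonStaudt_clausen n
  set S := {p ∈ range (2 * n + 2) | p.Prime ∧ (p - 1) ∣ 2 * n}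
  have h2S : 2 ∈ S := by simp [S, Nat.prime_two]; omega
  have hodd : padicNorm 2 (∑ p ∈ S.erase 2, (1 : ℚ) / p) ≤ 1 := by
    refine padicNorm.sum_le' (fun p hp ↦ ?_) zero_le_one
    obtain ⟨hp2, hpS⟩ := mem_erase.1 hp
    have hp : p.Prime := (mem_filter.1 hpS).2.1
    have h2p : ¬2 ∣ p := fun h ↦ hp2 ((hp.eq_one_or_self_of_dvd 2 h).resolve_left (by omega)).symm
    rw [padicNorm.div, padicNorm.one, (padicNorm.nat_eq_one_iff p).2 h2p, div_one]
  have hhalf : padicNorm 2 (1 / 2 : ℚ) = 2 := by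
    rw [padicNorm.div, padicNorm.one, show (2 : ℚ) = (2 : ℕ) by norm_num,
      padicNorm.padicNorm_p_of_prime]
    norm_num
  have hint : padicNorm 2 (bernoulli (2 * n) + 1 / 2) ≤ 1 := by
    have hsplit : bernoulli (2 * n) + 1 / 2 = z - ∑ p ∈ S.erase 2, (1 : ℚ) / p := by
      rw [hz, ← add_sum_erase _ _ h2S, Nat.cast_two]; ring
    rw [hsplit]
    exact padicNorm.sub.trans (max_le (padicNorm.of_int z) hodd)
  calc padicNorm 2 (bernoulli (2 * n))
      = padicNorm 2 ((bernoulli (2 * n) + 1 / 2) + -(1 / 2)) := by ring_nf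
    _ = max (padicNorm 2 (bernoulli (2 * n) + 1 / 2)) 2 := by
      rw [padicNorm.add_eq_max_of_ne] <;> rw [padicNorm.neg, hhalf]
      exact (hint.trans_lt one_lt_two).ne
    _ = 2 := max_eq_right (hint.trans one_le_two)

theorem padicValRat_two_bernoulli_two_mul {n : ℕ} (hn : 0 < n) :
    padicValRat 2 (bernoulli (2 * n)) = -1 := by
  have h := padicNorm_two_bernoulli_two_mul hn
  have hne : bernoulli (2 * n) ≠ 0 := fun h0 ↦ by simp [h0] at h
  rw [padicNorm.eq_zpow_of_nonzero hne] at h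
  have := zpow_right_injective₀ (a := ((2 : ℕ) : ℚ)) (by norm_num) (by norm_num)
    (h.trans (zpow_one _).symm)
  omega

theorem padicValNat_two_choose_two {n : ℕ} (hn : n ≠ 0) (he : Even n) :
    padicValNat 2 (n.choose 2) + 1 = padicValNat 2 n := by
  have hc : n.choose 2 * 2 = n * (n - 1) := by
    rw [Nat.choose_two_right, Nat.div_two_mul_two_of_even (Nat.even_mul_pred_self n)]
  obtain ⟨t, rfl⟩ := he
  have hn1 : ¬2 ∣ t + t - 1 := by omega
  have := congrArg (padicValNat 2) hc
  rw [padicValNat.mul (Nat.choose_pos (by omega)).ne' two_ne_zero,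
    padicValNat.mul hn (by omega), padicValNat.self one_lt_two,
    padicValNat.eq_zero_of_not_dvd hn1] at this
  omega

theorem padicValRat_two_choose_two_mul_sq_sub_one_div {ℓ n : ℕ} (hℓ : 1 < ℓ) (hℓo : Odd ℓ)
    (hn : n ≠ 0) (he : Even n) :
    padicValRat 2 ((n.choose 2 : ℚ) * ((ℓ : ℚ) ^ 2 - 1) / ((ℓ : ℚ) ^ n - 1)) = 0 := by
  have hcast (m : ℕ) : (ℓ : ℚ) ^ m - 1 = ((ℓ ^ m - 1 : ℕ) : ℚ) := by
    rw [Nat.cast_sub (Nat.one_le_pow _ _ (by omega)), Nat.cast_pow, Nat.cast_one]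
  have hne (m : ℕ) (hm : m ≠ 0) : ((ℓ ^ m - 1 : ℕ) : ℚ) ≠ 0 :=
    Nat.cast_ne_zero.2 (Nat.sub_ne_zero_of_lt (Nat.one_lt_pow hm hℓ))
  have hC : (n.choose 2 : ℚ) ≠ 0 := by
    obtain ⟨t, rfl⟩ := he
    exact Nat.cast_ne_zero.2 (Nat.choose_pos (by omega)).ne'
  have hℓ2 : ¬2 ∣ ℓ := Nat.not_even_iff_odd.2 hℓo ∘ even_iff_two_dvd.2
  have hLTE_n := padicValNat.pow_two_sub_one hℓ hℓ2 hn he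
  have hLTE_2 := padicValNat.pow_two_sub_one hℓ hℓ2 two_ne_zero even_two
  rw [padicValNat.self one_lt_two] at hLTE_2
  have hchoose := padicValNat_two_choose_two hn he
  rw [hcast, hcast, padicValRat.div (mul_ne_zero hC (hne 2 two_ne_zero)) (hne n hn),
    padicValRat.mul hC (hne 2 two_ne_zero), padicValRat.of_nat, padicValRat.of_nat,
    padicValRat.of_nat]
  omega

theorem stmt_17 (k ℓ : ℕ) (hk : 3 ≤ k) (hko : Odd k) (hℓ : 3 ≤ ℓ) (hℓo : Odd ℓ) :
    ¬ ∃ α : ℚ, α ^ 2 =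
      ((k + 1).choose 2 : ℚ) * ((ℓ : ℚ) ^ 2 - 1) * bernoulli (k - 1) /
        ((ℓ : ℚ) ^ (k + 1) - 1) := by
  obtain ⟨m, rfl⟩ := hko
  have hℓ1 : (1 : ℚ) < ℓ := by exact_mod_cast (by omega : 1 < ℓ)
  have hunit_ne : ((2 * m + 1 + 1).choose 2 : ℚ) * ((ℓ : ℚ) ^ 2 - 1) /
      ((ℓ : ℚ) ^ (2 * m + 1 + 1) - 1) ≠ 0 :=
    div_ne_zero (mul_ne_zero (Nat.cast_ne_zero.2 (Nat.choose_pos (by omega)).ne')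
      (sub_ne_zero.2 (one_lt_pow₀ hℓ1 two_ne_zero).ne'))
      (sub_ne_zero.2 (one_lt_pow₀ hℓ1 (by omega)).ne')
  have hunit := padicValRat_two_choose_two_mul_sq_sub_one_div (by omega) hℓo
    (by omega : 2 * m + 1 + 1 ≠ 0) ⟨m + 1, by ring⟩
  have hB := padicValRat_two_bernoulli_two_mul (n := m) (by omega)
  have hB_ne : bernoulli (2 * m) ≠ 0 := fun h ↦ by simp [h] at hB
  refine not_exists_sq_eq_of_odd_padicValRat (p := 2) ?_
  rw [Nat.add_sub_cancel, mul_div_right_comm, padicValRat.mul hunit_ne hB_ne, hunit, hB]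
  exact odd_neg_one
end

section
/- Let k ≥ 2 and ℓ ≥ 2 be integers with k ≠ 3, and let H(X) = B_{k+1}(ℓX+1) - B_{k+1}(X+1) ∈ ℚ[X]. If r ∈ {1, 2} is the multiplicity of 0 as a root of H and H/(ℓ^{k+1}-1) = X^r (X + α)^{k+1-r} for some complex number α, then a contradiction follows; i.e., H is not of the form c·X^r(X+α)^{k+1-r}. -/
open Polynomial Finset

lemma pc (c : ℚ) (d m : ℕ) : ((C c * X + 1 : ℚ[X])^d).coeff m = (d.choose m) * c^m := by
  rw [add_pow, finset_sum_coeff]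
  rw [Finset.sum_eq_single m]
  · simp only [one_pow, mul_one, mul_pow, ← C_pow, ← C_eq_natCast,
      coeff_mul_C, coeff_C_mul, coeff_X_pow_self, one_mul]
    ring
  · intro i _ hi
    simp only [one_pow, mul_one, mul_pow, ← C_pow, ← C_eq_natCast,
      coeff_mul_C, coeff_C_mul, coeff_X_pow]
    simp [Ne.symm hi]
  · intro h
    simp only [Finset.mem_range, not_lt] at h
    simp [Nat.choose_eq_zero_of_lt h]

lemma Hc (n m : ℕ) (c : ℚ) :
    ((Polynomial.bernoulli n).comp (C c * X + 1)).coeff m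
      = (∑ i ∈ Finset.range (n+1), _root_.bernoulli i * (n.choose i) * ((n-i).choose m)) * c ^ m := by
  rw [Polynomial.bernoulli, Polynomial.comp, Polynomial.eval₂_finset_sum, finset_sum_coeff,
    Finset.sum_mul]
  refine Finset.sum_congr rfl fun i _ => ?_
  rw [← Polynomial.comp, monomial_comp, coeff_C_mul, pc]
  ring

lemma Hcoeff (n m : ℕ) (c : ℚ) :
    ((Polynomial.bernoulli n).comp (C c * X + 1) - (Polynomial.bernoulli n).comp (X + 1)).coeff m
      = (∑ i ∈ Finset.range (n+1), _root_.bernoulli i * (n.choose i) * ((n-i).choose m)) * (c^m - 1) := by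
  rw [coeff_sub, Hc, show (X + 1 : ℚ[X]) = C 1 * X + 1 by rw [C_1, one_mul], Hc]
  ring

lemma bern2 : _root_.bernoulli 2 = 1/6 := by norm_num [_root_.bernoulli, bernoulli'_two]

lemma choose2_cast {K : Type*} [Field K] [CharZero K] (n : ℕ) :
    ((n+2).choose 2 : K) = (n+2)*(n+1)/2 := by
  have h : (n+2)*(n+1) = 2 * ((n+2).choose 2) := by
    rw [Nat.choose_two_right, show n+2-1 = n+1 from rfl]
    refine (Nat.mul_div_cancel' ?_).symm
    rw [mul_comm]
    exact (Nat.even_mul_succ_self (n+1)).two_dvd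
  have h2 : ((n:K)+2)*((n:K)+1) = 2 * ((n+2).choose 2 : K) := by exact_mod_cast congrArg Nat.cast h
  rw [eq_div_iff (by norm_num : (2:K) ≠ 0)]
  linear_combination -h2

lemma S1 (j : ℕ) :
    ∑ i ∈ range (j+4), _root_.bernoulli i * ((j+3).choose i) * ((j+3-i).choose (j+2))
      = (j+3)/2 := by
  rw [← Finset.sum_subset (show range 2 ⊆ range (j+4) by intro x hx; simp at hx ⊢; omega)
      (fun x _ hx => by
        simp only [Finset.mem_range, not_lt] at hx
        have : (j+3-x).choose (j+2) = 0 := Nat.choose_eq_zero_of_lt (by omega)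
        rw [this]; simp)]
  have e1 : (j+3).choose (j+2) = j+3 := Nat.choose_succ_self_right (j+2)
  rw [Finset.sum_range_succ, Finset.sum_range_one, _root_.bernoulli_zero, _root_.bernoulli_one,
    show j+3-0 = j+3 from rfl, show j+3-1 = j+2 from rfl, e1, Nat.choose_zero_right,
    Nat.choose_one_right, Nat.choose_self]
  push_cast; ring

lemma S2 (j : ℕ) :
    ∑ i ∈ range (j+4), _root_.bernoulli i * ((j+3).choose i) * ((j+3-i).choose (j+1))
      = (j+3)*(j+2)/12 := by
  rw [← Finset.sum_subset (show range 3 ⊆ range (j+4) by intro x hx; simp at hx ⊢; omega)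
      (fun x _ hx => by
        simp only [Finset.mem_range, not_lt] at hx
        have : (j+3-x).choose (j+1) = 0 := Nat.choose_eq_zero_of_lt (by omega)
        rw [this]; simp)]
  have e1 : (j+3).choose (j+1) = (j+3).choose 2 := Nat.choose_symm (n := j+3) (k := 2) (by omega)
  have e2 : (j+2).choose (j+1) = j+2 := Nat.choose_succ_self_right (j+1)
  rw [Finset.sum_range_succ, Finset.sum_range_succ, Finset.sum_range_one,
    _root_.bernoulli_zero, _root_.bernoulli_one, bern2,
    show j+3-0 = j+3 from rfl, show j+3-1 = j+2 from rfl, show j+3-2 = j+1 from rfl,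
    e1, e2, Nat.choose_zero_right, Nat.choose_one_right, Nat.choose_self,
    show ((j+3).choose 2 : ℚ) = ((j+1)+2).choose 2 from rfl, choose2_cast]
  push_cast; ring

lemma contraZ (a b t l : ℤ) (h3 : 2*b+1 ≤ 3*a) (ht : 2 ≤ t) (hl : 2 ≤ l) (hb : 1 ≤ b)
    (h : 3*a*(t*l-1)^2 = 2*b*((t-1)*(t*l^2-1))) : False := by
  have k1 : (t*l-1)^2 = (t-1)*(t*l^2-1) + t*(l-1)^2 := by ring
  have hP : 1 ≤ (t-1)*(t*l^2-1) := by nlinarith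
  have hQ : 2 ≤ t*(l-1)^2 := by nlinarith
  have key : (3*a - 2*b) * ((t-1)*(t*l^2-1)) + 3*a*(t*(l-1)^2) = 0 := by
    linear_combination h - (3*a)*k1
  nlinarith [mul_pos (by linarith : (0:ℤ) < 3*a-2*b) (by linarith : (0:ℤ) < (t-1)*(t*l^2-1)),
    mul_pos (by linarith : (0:ℤ) < 3*a) (by linarith : (0:ℤ) < t*(l-1)^2)]

lemma R1a (D a : ℂ) (j : ℕ) : (C D * X ^ 1 * (X + C a) ^ (j+2)).coeff (j+2)
    = D * (a * ((j:ℂ)+2)) := by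
  rw [mul_assoc, coeff_C_mul, pow_one, show j+2 = (j+1)+1 from rfl, coeff_X_mul,
    coeff_X_add_C_pow, show (j+1)+1-(j+1) = 1 by omega, pow_one, Nat.choose_succ_self_right]
  push_cast; ring

lemma R1b (D a : ℂ) (j : ℕ) : (C D * X ^ 1 * (X + C a) ^ (j+2)).coeff (j+1)
    = D * (a^2 * (((j:ℂ)+2)*((j:ℂ)+1)/2)) := by
  rw [mul_assoc, coeff_C_mul, pow_one, coeff_X_mul, coeff_X_add_C_pow,
    show j+2-j = 2 by omega,
    show (j+2).choose j = (j+2).choose 2 from Nat.choose_symm (n := j+2) (k := 2) (by omega),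
    choose2_cast]

lemma R2a (D a : ℂ) (i : ℕ) : (C D * X ^ 2 * (X + C a) ^ (i+3)).coeff (i+4)
    = D * (a * ((i:ℂ)+3)) := by
  rw [mul_assoc, coeff_C_mul, show i+4 = (i+2)+2 from rfl, coeff_X_pow_mul, coeff_X_add_C_pow,
    show i+3-(i+2) = 1 by omega, pow_one,
    show (i+3).choose (i+2) = i+3 from Nat.choose_succ_self_right (i+2)]
  push_cast; ring

lemma R2b (D a : ℂ) (i : ℕ) : (C D * X ^ 2 * (X + C a) ^ (i+3)).coeff (i+3)
    = D * (a^2 * (((i:ℂ)+3)*((i:ℂ)+2)/2)) := by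
  rw [mul_assoc, coeff_C_mul, show i+3 = (i+1)+2 from rfl, coeff_X_pow_mul, coeff_X_add_C_pow,
    show (i+1)+2-(i+1) = 2 by omega,
    show ((i+1)+2).choose (i+1) = ((i+1)+2).choose 2 from
      Nat.choose_symm (n := (i+1)+2) (k := 2) (by omega),
    choose2_cast]
  push_cast; ring

lemma R2z (D a : ℂ) (n : ℕ) : (C D * X ^ 2 * (X + C a) ^ n).coeff 1 = 0 := by
  rw [mul_assoc, coeff_C_mul, coeff_X_pow_mul']
  norm_num

open Polynomial in
theorem stmt_18 (k ℓ : ℕ) (hk : 2 ≤ k) (hk3 : k ≠ 3) (hℓ : 2 ≤ ℓ) (r : ℕ)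
    (hr : r ∈ ({1, 2} : Set ℕ))
    (hmult : r = ((Polynomial.bernoulli (k + 1)).comp (C (ℓ : ℚ) * X + 1) -
      (Polynomial.bernoulli (k + 1)).comp (X + 1)).rootMultiplicity 0)
    (α : ℂ)
    (hfact : ((Polynomial.bernoulli (k + 1)).comp (C (ℓ : ℚ) * X + 1) -
        (Polynomial.bernoulli (k + 1)).comp (X + 1)).map (algebraMap ℚ ℂ) =
      C (((ℓ : ℂ)) ^ (k + 1) - 1) * X ^ r * (X + C α) ^ (k + 1 - r)) : False := by
  obtain ⟨j, rfl⟩ : ∃ j, k = j + 2 := ⟨k - 2, by omega⟩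
  rw [show j+2+1 = j+3 from rfl] at hfact
  have hj0 : (0:ℤ) ≤ (j:ℤ) := Int.natCast_nonneg j
  have hl2 : (2:ℤ) ≤ (ℓ:ℤ) := by exact_mod_cast hℓ
  simp only [Set.mem_insert_iff, Set.mem_singleton_iff] at hr
  rcases hr with rfl | rfl
  · -- r = 1
    rw [show j+3-1 = j+2 from rfl] at hfact
    have eA : ((Polynomial.bernoulli (j+3)).comp (C (ℓ:ℚ) * X + 1) -
        (Polynomial.bernoulli (j+3)).comp (X + 1)).coeff (j+2)
        = (((j:ℚ)+3)/2) * ((ℓ:ℚ)^(j+2) - 1) := by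
      rw [Hcoeff]
      have s1 := S1 j
      rw [show j+4 = j+3+1 from rfl] at s1
      rw [s1]
    have eB : ((Polynomial.bernoulli (j+3)).comp (C (ℓ:ℚ) * X + 1) -
        (Polynomial.bernoulli (j+3)).comp (X + 1)).coeff (j+1)
        = (((j:ℚ)+3)*((j:ℚ)+2)/12) * ((ℓ:ℚ)^(j+1) - 1) := by
      rw [Hcoeff]
      have s2 := S2 j
      rw [show j+4 = j+3+1 from rfl] at s2
      rw [s2]
    have hA := congrArg (fun p => p.coeff (j+2)) hfact
    have hB := congrArg (fun p => p.coeff (j+1)) hfact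
    simp only [coeff_map] at hA hB
    rw [eA, R1a] at hA
    rw [eB, R1b] at hB
    rw [eq_ratCast] at hA hB
    push_cast at hA hB
    have hj3 : ((j:ℂ)+3) ≠ 0 := by
      intro h
      have h2 : ((j+3 : ℕ) : ℂ) = 0 := by push_cast; linear_combination h
      exact absurd (Nat.cast_eq_zero.mp h2) (by omega)
    have key' : ((j:ℂ)+3) * (3*((j:ℂ)+1)*((j:ℂ)+3)*(((ℓ:ℂ))^(j+2)-1)^2)
        = ((j:ℂ)+3) * (2*((j:ℂ)+2)^2*((((ℓ:ℂ))^(j+1)-1)*(((ℓ:ℂ))^(j+3)-1))) := by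
      linear_combination (6*((j:ℂ)+1)*(((j:ℂ)+3)*(((ℓ:ℂ))^(j+2)-1)
          + 2*((j:ℂ)+2)*(((ℓ:ℂ))^(j+3)-1)*α)) * hA
        - (24*((j:ℂ)+2)*(((ℓ:ℂ))^(j+3)-1)) * hB
    have key := mul_left_cancel₀ hj3 key'
    have hZ : 3*((j:ℤ)+1)*((j:ℤ)+3)*((ℓ:ℤ)^(j+2)-1)^2
        = 2*((j:ℤ)+2)^2*(((ℓ:ℤ)^(j+1)-1)*((ℓ:ℤ)^(j+3)-1)) := by exact_mod_cast key
    have ht : (2:ℤ) ≤ (ℓ:ℤ)^(j+1) := by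
      exact_mod_cast le_trans hℓ (Nat.le_self_pow (by omega) ℓ)
    exact contraZ (((j:ℤ)+1)*((j:ℤ)+3)) (((j:ℤ)+2)^2) ((ℓ:ℤ)^(j+1)) (ℓ:ℤ)
      (by nlinarith [hj0, sq_nonneg (j:ℤ)]) ht hl2 (by nlinarith [hj0])
      (by linear_combination hZ)
  · -- r = 2
    rw [show j+3-2 = j+1 from rfl] at hfact
    by_cases hj : j = 0
    · subst hj
      have eB : ((Polynomial.bernoulli (0+3)).comp (C (ℓ:ℚ) * X + 1) -
          (Polynomial.bernoulli (0+3)).comp (X + 1)).coeff (0+1)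
          = (((0:ℚ)+3)*((0:ℚ)+2)/12) * ((ℓ:ℚ)^(0+1) - 1) := by
        rw [Hcoeff]
        have s2 := S2 0
        rw [show 0+4 = 0+3+1 from rfl] at s2
        rw [s2]
        norm_num
      have hB := congrArg (fun p => p.coeff (0+1)) hfact
      simp only [coeff_map] at hB
      rw [eB, show (0:ℕ)+1 = 1 from rfl, R2z] at hB
      have h0 : (((0:ℚ)+3)*((0:ℚ)+2)/12) * ((ℓ:ℚ)^(0+1) - 1) = 0 :=
        (algebraMap ℚ ℂ).injective (by simpa using hB)
      have h2 : (2:ℚ) ≤ (ℓ:ℚ) := by exact_mod_cast hℓ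
      nlinarith [h0, h2]
    · obtain ⟨i, rfl⟩ : ∃ i, j = i + 2 := ⟨j - 2, by omega⟩
      rw [show i+2+3 = i+5 from rfl, show i+2+1 = i+3 from rfl] at hfact
      have eA : ((Polynomial.bernoulli (i+5)).comp (C (ℓ:ℚ) * X + 1) -
          (Polynomial.bernoulli (i+5)).comp (X + 1)).coeff (i+4)
          = (((i:ℚ)+5)/2) * ((ℓ:ℚ)^(i+4) - 1) := by
        rw [Hcoeff]
        have s1 := S1 (i+2)
        rw [show i+2+4 = i+5+1 from rfl, show i+2+3 = i+5 from rfl,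
          show i+2+2 = i+4 from rfl] at s1
        rw [s1]
        push_cast; ring
      have eB : ((Polynomial.bernoulli (i+5)).comp (C (ℓ:ℚ) * X + 1) -
          (Polynomial.bernoulli (i+5)).comp (X + 1)).coeff (i+3)
          = (((i:ℚ)+5)*((i:ℚ)+4)/12) * ((ℓ:ℚ)^(i+3) - 1) := by
        rw [Hcoeff]
        have s2 := S2 (i+2)
        rw [show i+2+4 = i+5+1 from rfl, show i+2+3 = i+5 from rfl,
          show i+2+1 = i+3 from rfl] at s2
        rw [s2]
        push_cast; ring
      have hA := congrArg (fun p => p.coeff (i+4)) hfact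
      have hB := congrArg (fun p => p.coeff (i+3)) hfact
      simp only [coeff_map] at hA hB
      rw [eA, R2a] at hA
      rw [eB, R2b] at hB
      rw [eq_ratCast] at hA hB
      push_cast at hA hB
      have hi5 : ((i:ℂ)+5) ≠ 0 := by
        intro h
        have h2 : ((i+5 : ℕ) : ℂ) = 0 := by push_cast; linear_combination h
        exact absurd (Nat.cast_eq_zero.mp h2) (by omega)
      have key' : ((i:ℂ)+5) * (3*((i:ℂ)+2)*((i:ℂ)+5)*(((ℓ:ℂ))^(i+4)-1)^2)
          = ((i:ℂ)+5) * (2*((i:ℂ)+4)*((i:ℂ)+3)*((((ℓ:ℂ))^(i+3)-1)*(((ℓ:ℂ))^(i+5)-1))) := by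
        linear_combination (6*((i:ℂ)+2)*(((i:ℂ)+5)*(((ℓ:ℂ))^(i+4)-1)
            + 2*((i:ℂ)+3)*(((ℓ:ℂ))^(i+5)-1)*α)) * hA
          - (24*((i:ℂ)+3)*(((ℓ:ℂ))^(i+5)-1)) * hB
      have key := mul_left_cancel₀ hi5 key'
      have hZ : 3*((i:ℤ)+2)*((i:ℤ)+5)*((ℓ:ℤ)^(i+4)-1)^2
          = 2*((i:ℤ)+4)*((i:ℤ)+3)*(((ℓ:ℤ)^(i+3)-1)*((ℓ:ℤ)^(i+5)-1)) := by exact_mod_cast key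
      have ht : (2:ℤ) ≤ (ℓ:ℤ)^(i+3) := by
        exact_mod_cast le_trans hℓ (Nat.le_self_pow (by omega) ℓ)
      have hi0 : (0:ℤ) ≤ (i:ℤ) := Int.natCast_nonneg i
      exact contraZ (((i:ℤ)+2)*((i:ℤ)+5)) (((i:ℤ)+4)*((i:ℤ)+3)) ((ℓ:ℤ)^(i+3)) (ℓ:ℤ)
        (by nlinarith [hi0, sq_nonneg (i:ℤ)]) ht hl2 (by nlinarith [hi0])
        (by linear_combination hZ)
end

section
/- For all integers ℓ ≥ 2 and k ≥ 2, the rational number r defined by r = k(1 - 2(ℓ^{k-1}-1)(ℓ^{k+1}-1)/(3(k+1)(ℓ^k-1)^2 - 2k(ℓ^{k-1}-1)(ℓ^{k+1}-1))) satisfies k - 2 < r < k. -/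
theorem stmt_19 (ℓ : ℤ) (k : ℕ) (hℓ : 2 ≤ ℓ) (hk : 2 ≤ k) :
    (k : ℚ) - 2 <
      (k : ℚ) * (1 - 2 * ((ℓ : ℚ) ^ (k - 1) - 1) * ((ℓ : ℚ) ^ (k + 1) - 1) /
        (3 * ((k : ℚ) + 1) * ((ℓ : ℚ) ^ k - 1) ^ 2 -
          2 * (k : ℚ) * ((ℓ : ℚ) ^ (k - 1) - 1) * ((ℓ : ℚ) ^ (k + 1) - 1))) ∧
    (k : ℚ) * (1 - 2 * ((ℓ : ℚ) ^ (k - 1) - 1) * ((ℓ : ℚ) ^ (k + 1) - 1) /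
        (3 * ((k : ℚ) + 1) * ((ℓ : ℚ) ^ k - 1) ^ 2 -
          2 * (k : ℚ) * ((ℓ : ℚ) ^ (k - 1) - 1) * ((ℓ : ℚ) ^ (k + 1) - 1)))
      < (k : ℚ) := by
  set x : ℚ := (ℓ : ℚ) with hxdef
  have hx : (2 : ℚ) ≤ x := by rw [hxdef]; exact_mod_cast hℓ
  set y : ℚ := x ^ (k - 1) with hydef
  have hy : (2 : ℚ) ≤ y := by
    calc (2:ℚ) ≤ x := hx
    _ ≤ x ^ (k-1) := le_self_pow₀ (by linarith) (by omega)
  have hK : (2 : ℚ) ≤ (k : ℚ) := by exact_mod_cast hk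
  have e2 : x ^ k = y * x := by
    rw [hydef, ← pow_succ]
    congr 1
    omega
  have e3 : x ^ (k + 1) = y * x ^ 2 := by
    rw [hydef, ← pow_add]
    congr 1
    omega
  rw [e2, e3]
  set K : ℚ := (k : ℚ) with hKdef
  set A : ℚ := (y - 1) * (y * x ^ 2 - 1) with hA
  set B : ℚ := (y * x - 1) ^ 2 with hB
  have hBA : B - A = y * (x - 1) ^ 2 := by rw [hA, hB]; ring
  have hBA' : A ≤ B := by nlinarith [sq_nonneg (x - 1)]
  have hApos : 0 < A := by
    have h1 : (4:ℚ) ≤ x ^ 2 := by nlinarith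
    have h2 : (8:ℚ) ≤ y * x ^ 2 := by nlinarith
    rw [hA]; exact mul_pos (by linarith) (by linarith)
  have hBpos : 0 < B := by nlinarith
  set D : ℚ := 3 * (K + 1) * (y * x - 1) ^ 2 - 2 * K * (y - 1) * (y * x ^ 2 - 1)
      with hD
  have hDA : D = 3 * (K + 1) * B - 2 * K * A := by rw [hD, hA, hB]; ring
  have hDpos : 0 < D := by rw [hDA]; nlinarith
  have hDKA : K * A < D := by rw [hDA]; nlinarith
  have hform : K * (1 - 2 * (y - 1) * (y * x ^ 2 - 1) / D)
      = K - 2 * K * A / D := by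
    rw [hA]; field_simp
  rw [hform]
  have hlt : 2 * K * A / D < 2 := (div_lt_iff₀ hDpos).mpr (by nlinarith)
  have hgt : 0 < 2 * K * A / D := by positivity
  constructor <;> linarith
end
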